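/- arXiv:2411.02705 — 7 statements merged into one kernel-verified Lean document; each statement's English description precedes it below -/
import Mathlib

section
/- Let d ≥ 0 be an integer, let X be a finite graph with maximum degree at most d, let D = d·|V(X)| − Σ_{x ∈ V(X)} deg_X(x), and let Y be a D-regular finite graph. Then there exists a d-regular graph Z on the vertex set V(X) × V(Y) such that: (1) the projection φ(x,y) = y is a graph homomorphism that may collapse edges (adjacent vertices map to adjacent or equal vertices); (2) for every y ∈ V(Y), the subgraph induced on φ^{-1}(y) is isomorphic to X; (3) for every edge y₁y₂ of Y, there is exactly one edge of Z mapping onto {y₁, y₂} under φ. -/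
/-!
Every vertex `x` of `X` has `d - deg x` missing edges, `D` in total, and every vertex `y` of `Y`
has `D` incident edges. Take one copy of `X` over each vertex of `Y` and, at each `y`, distribute
the `D` edges of `Y` at `y` among the vertices of the fibre so that `x` receives exactly
`d - deg x` of them; every edge `yy'` of `Y` then becomes a single edge joining the chosen
vertices of the fibres over `y` and `y'`, and every vertex ends up with degree `d`.
-/

theorem exists_nat_card_fiber_eq {ι α : Type*} [Finite ι] [Fintype α] (c : α → ℕ)
    (h : Nat.card ι = ∑ a, c a) : ∃ g : ι → α, ∀ a, Nat.card {i // g i = a} = c a := by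
  obtain ⟨e⟩ : Nonempty (ι ≃ Σ a, Fin (c a)) :=
    Finite.card_eq.mp (by simpa [Nat.card_sigma] using h)
  refine ⟨fun i ↦ (e i).1, fun a ↦ ?_⟩
  rw [Nat.card_congr ((e.subtypeEquiv fun _ => Iff.rfl).trans (Equiv.sigmaSubtype a))]
  simp

namespace SimpleGraph

variable {α β : Type*} (X : SimpleGraph α) (Y : SimpleGraph β)
  (port : ∀ y, Y.neighborSet y → α)

/-- `port y y'` is the vertex of the fibre over `y` at which the edge `yy'` of `Y` is attached. -/
def extension : SimpleGraph (α × β) where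
  Adj z z' := (z.2 = z'.2 ∧ X.Adj z.1 z'.1) ∨
    ∃ h : Y.Adj z.2 z'.2, z.1 = port z.2 ⟨z'.2, h⟩ ∧ z'.1 = port z'.2 ⟨z.2, h.symm⟩
  symm := ⟨by
    rintro z z' (⟨hy, hx⟩ | ⟨h, h₁, h₂⟩)
    exacts [.inl ⟨hy.symm, hx.symm⟩, .inr ⟨h.symm, h₂, h₁⟩]⟩
  loopless := ⟨by
    rintro z (⟨-, h⟩ | ⟨h, -⟩)
    exacts [X.irrefl h, Y.irrefl h]⟩

variable {X Y port}

theorem extension_adj_snd {z z' : α × β} (h : (X.extension Y port).Adj z z') :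
    Y.Adj z.2 z'.2 ∨ z.2 = z'.2 := by
  rcases h with ⟨hy, -⟩ | ⟨h, -⟩
  exacts [.inr hy, .inl h]

variable (X Y port)

def extensionFiberIso (y : β) : (X.extension Y port).induce {z | z.2 = y} ≃g X where
  toFun z := z.1.1
  invFun x := ⟨(x, y), rfl⟩
  left_inv := by rintro ⟨⟨x, y⟩, rfl⟩; rfl
  right_inv _ := rfl
  map_rel_iff' := by
    rintro ⟨⟨x₁, y₁⟩, rfl : y₁ = y⟩ ⟨⟨x₂, y₂⟩, rfl : y₂ = y₁⟩
    simp [extension]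

theorem existsUnique_mem_edgeSet_map_snd {y₁ y₂ : β} (h : Y.Adj y₁ y₂) :
    ∃! e ∈ (X.extension Y port).edgeSet, Sym2.map Prod.snd e = s(y₁, y₂) := by
  refine ⟨s((port y₁ ⟨y₂, h⟩, y₁), (port y₂ ⟨y₁, h.symm⟩, y₂)), ⟨.inr ⟨h, rfl, rfl⟩, rfl⟩, ?_⟩
  intro e
  induction e using Sym2.ind with | h z z' => ?_
  obtain ⟨x, y⟩ := z
  obtain ⟨x', y'⟩ := z'
  rintro ⟨he, hmap⟩
  simp only [mem_edgeSet, extension] at he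
  rcases he with ⟨rfl, -⟩ | ⟨h', hx, hx'⟩
  · obtain ⟨rfl, rfl⟩ | ⟨rfl, rfl⟩ := Sym2.eq_iff.mp hmap <;> exact absurd h Y.irrefl
  · rw [hx, hx']
    obtain ⟨rfl, rfl⟩ | ⟨rfl, rfl⟩ := Sym2.eq_iff.mp hmap
    exacts [rfl, Sym2.eq_swap]

theorem ncard_neighborSet_extension [Finite α] [Finite β] (x : α) (y : β) :
    ((X.extension Y port).neighborSet (x, y)).ncard =
      (X.neighborSet x).ncard + Nat.card {y' : Y.neighborSet y // port y y' = x} := by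
  set inFiber : α → α × β := (·, y)
  set acrossY : {y' : Y.neighborSet y // port y y' = x} → α × β :=
    fun y' ↦ (port y'.1 ⟨y, Y.adj_symm y'.1.2⟩, y'.1)
  have hsplit : (X.extension Y port).neighborSet (x, y) =
      inFiber '' X.neighborSet x ∪ Set.range acrossY := by
    ext ⟨x', y'⟩
    simp only [extension, mem_neighborSet, Set.mem_union, Set.mem_image, Prod.mk.injEq,
      ↓existsAndEq, true_and, Set.mem_range, Subtype.exists, exists_and_right, exists_eq_right,
      inFiber, acrossY]
    exact or_congr and_comm (exists_congr fun _ ↦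
      ⟨fun ⟨h, h'⟩ ↦ ⟨h.symm, h'.symm⟩, fun ⟨h, h'⟩ ↦ ⟨h.symm, h'.symm⟩⟩)
  have hdisj : Disjoint (inFiber '' X.neighborSet x) (Set.range acrossY) := by
    rw [Set.disjoint_left]
    rintro _ ⟨x', -, rfl⟩ ⟨⟨⟨y', hy'⟩, _⟩, h⟩
    have hy : y' = y := congrArg Prod.snd h
    exact Y.irrefl (hy ▸ hy')
  have hinj : Function.Injective acrossY := fun i j h ↦
    Subtype.ext (Subtype.ext (congrArg Prod.snd h))
  rw [hsplit, Set.ncard_union_eq hdisj, Set.ncard_image_of_injective _ (Prod.mk_left_injective y),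
    Set.ncard_range_of_injective hinj]

end SimpleGraph

open SimpleGraph

/-- Extension Lemma: any graph `X` of maximum degree at most `d` extends to a
`d`-regular graph `Z = X ⋊ Y`, where `Y` is any `D`-regular graph and
`D = d|X| - Σ deg_X(x)` is the defect. -/
theorem stmt_4 (d : ℕ) {α β : Type*} [Fintype α] [Fintype β]
    (X : SimpleGraph α) (Y : SimpleGraph β)
    (hX : ∀ x, (X.neighborSet x).ncard ≤ d)
    (D : ℕ) (hD : D = d * Fintype.card α - ∑ x : α, (X.neighborSet x).ncard)
    (hY : ∀ y, (Y.neighborSet y).ncard = D) :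
    ∃ Z : SimpleGraph (α × β),
      (∀ v, (Z.neighborSet v).ncard = d) ∧
      (∀ z z' : α × β, Z.Adj z z' → Y.Adj z.2 z'.2 ∨ z.2 = z'.2) ∧
      (∀ y : β, Nonempty ((Z.induce {z : α × β | z.2 = y}) ≃g X)) ∧
      (∀ y₁ y₂ : β, Y.Adj y₁ y₂ →
        ∃! e : Sym2 (α × β), e ∈ Z.edgeSet ∧ Sym2.map Prod.snd e = s(y₁, y₂)) := by
  have hdefect : ∑ x, (d - (X.neighborSet x).ncard) = D := by
    rw [hD, Finset.sum_tsub_distrib _ fun x _ ↦ hX x, Finset.sum_const, Finset.card_univ,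
      smul_eq_mul, mul_comm]
  choose port hport using fun y ↦ exists_nat_card_fiber_eq (ι := Y.neighborSet y)
    (fun x ↦ d - (X.neighborSet x).ncard) (by rw [Nat.card_coe_set_eq, hY, hdefect])
  refine ⟨X.extension Y port, fun ⟨x, y⟩ ↦ ?_, fun _ _ ↦ extension_adj_snd,
    fun y ↦ ⟨extensionFiberIso X Y port y⟩, fun _ _ ↦ existsUnique_mem_edgeSet_map_snd X Y port⟩
  rw [ncard_neighborSet_extension, hport]
  exact Nat.add_sub_cancel' (hX x)
end

section
/- Let a, b ≥ 0 and g ≥ 3 be integers. There exists a weighted cycle of total weight g in which every vertex is incident to at most a light edges (weight 1) and at most b heavy edges (weight 2) if and only if one of the following holds: (1) a ≥ 2; (2) a = 1, b ≥ 2, and g ≥ 5; (3) a = 1, b = 1, g ≥ 6, and g ≡ 0 mod 3; (4) a = 0, b ≥ 2, g ≥ 6, and g ≡ 0 mod 2. -/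
/-!
At every vertex of an `(a,b,g)`-wcycle on `n` vertices the light and heavy degrees add up to `2`.
So if the cycle has `x` light and `y` heavy edges, then `x + y = n`, `2x ≤ a n`, `2y ≤ b n`
and `g = x + 2y`, and for `n ≥ 3` this arithmetic already forces one of the four conditions.
Conversely, declare the edge `{i, i + 1}` of the `n`-cycle light or heavy according to a pattern:
all light (`n = g`), all heavy (`n = g / 2`), a single light edge (`n = (g + 1) / 2`, `g` odd),
or alternating (`n = 2g / 3`) realise the four cases.
-/

/-- An `(a,b,g)`-wcycle: graphs `L` (light) and `H` (heavy) with disjoint edge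
sets whose union is a cycle (connected and 2-regular), of total weight `g`,
in which every vertex is incident to at most `a` light and at most `b` heavy
edges. -/
def IsWCycle (n : ℕ) (L H : SimpleGraph (Fin n)) (a b g : ℕ) : Prop :=
  Disjoint L H ∧ (L ⊔ H).Connected ∧
  (∀ v, ((L ⊔ H).neighborSet v).ncard = 2) ∧
  (∀ v, (L.neighborSet v).ncard ≤ a) ∧
  (∀ v, (H.neighborSet v).ncard ≤ b) ∧
  L.edgeSet.ncard + 2 * H.edgeSet.ncard = g

open SimpleGraph Finset

section

variable {V : Type*} [Fintype V]

theorem SimpleGraph.two_mul_ncard_edgeSet (G : SimpleGraph V) :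
    2 * G.edgeSet.ncard = ∑ v, (G.neighborSet v).ncard := by
  classical
  simp_rw [← coe_edgeFinset, Set.ncard_coe_finset, ← sum_degrees_eq_twice_card_edges,
    ← card_neighborSet_eq_degree, Set.ncard_eq_toFinset_card', Set.toFinset_card]

theorem SimpleGraph.ncard_neighborSet_sup {G H : SimpleGraph V} (h : Disjoint G H) (v : V) :
    ((G ⊔ H).neighborSet v).ncard = (G.neighborSet v).ncard + (H.neighborSet v).ncard := by
  rw [neighborSet_sup, Set.ncard_union_eq (disjoint_neighborSet.2 h v)]

theorem SimpleGraph.three_le_card_of_ncard_neighborSet_eq_two [Nonempty V] {G : SimpleGraph V}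
    (h : ∀ v, (G.neighborSet v).ncard = 2) : 3 ≤ Fintype.card V := by
  obtain ⟨v⟩ := ‹Nonempty V›
  obtain ⟨x, y, hxy, hv⟩ := Set.ncard_eq_two.mp (h v)
  have hx : G.Adj v x := by simp [← mem_neighborSet, hv]
  have hy : G.Adj v y := by simp [← mem_neighborSet, hv]
  exact Fintype.two_lt_card_iff.mpr ⟨v, x, y, hx.ne, hy.ne, hxy⟩

theorem SimpleGraph.two_mul_ncard_edgeSet_le {G : SimpleGraph V} {d : ℕ}
    (h : ∀ v, (G.neighborSet v).ncard ≤ d) : 2 * G.edgeSet.ncard ≤ d * Fintype.card V := by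
  rw [two_mul_ncard_edgeSet, mul_comm]
  simpa using Finset.sum_le_card_nsmul univ _ d fun v _ => h v

end

theorem wcycle_constraints_of_counts {n a b x y g : ℕ} (hn : 3 ≤ n) (hxy : x + y = n)
    (hx : 2 * x ≤ a * n) (hy : 2 * y ≤ b * n) (hg : x + 2 * y = g) :
    2 ≤ a ∨ (a = 1 ∧ 2 ≤ b ∧ 5 ≤ g) ∨ (a = 1 ∧ b = 1 ∧ 6 ≤ g ∧ g % 3 = 0) ∨
      (a = 0 ∧ 2 ≤ b ∧ 6 ≤ g ∧ g % 2 = 0) := by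
  rcases Nat.lt_or_ge a 2 with ha | ha
  · rcases Nat.lt_or_ge b 2 with hb | hb
    · interval_cases a <;> interval_cases b <;> omega
    · interval_cases a <;> omega
  · exact Or.inl ha

namespace IsWCycle

variable {n a b g : ℕ} {L H : SimpleGraph (Fin n)}

theorem three_le (h : IsWCycle n L H a b g) : 3 ≤ n := by
  have : Nonempty (Fin n) := h.2.1.nonempty
  simpa using three_le_card_of_ncard_neighborSet_eq_two h.2.2.1

theorem ncard_add_ncard (h : IsWCycle n L H a b g) :
    L.edgeSet.ncard + H.edgeSet.ncard = n := by
  have hsum : 2 * L.edgeSet.ncard + 2 * H.edgeSet.ncard = 2 * n := by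
    rw [two_mul_ncard_edgeSet, two_mul_ncard_edgeSet, ← sum_add_distrib]
    simp_rw [← ncard_neighborSet_sup h.1, h.2.2.1]
    simp [mul_comm]
  omega

theorem constraints (h : IsWCycle n L H a b g) :
    2 ≤ a ∨ (a = 1 ∧ 2 ≤ b ∧ 5 ≤ g) ∨ (a = 1 ∧ b = 1 ∧ 6 ≤ g ∧ g % 3 = 0) ∨
      (a = 0 ∧ 2 ≤ b ∧ 6 ≤ g ∧ g % 2 = 0) :=
  wcycle_constraints_of_counts h.three_le h.ncard_add_ncard
    (by simpa using two_mul_ncard_edgeSet_le h.2.2.2.1)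
    (by simpa using two_mul_ncard_edgeSet_le h.2.2.2.2.1) h.2.2.2.2.2

end IsWCycle

namespace Fin

variable {n : ℕ} [NeZero n]

theorem self_ne_add_one (hn : 2 ≤ n) (v : Fin n) : v ≠ v + 1 := by
  intro h
  have := congrArg Fin.val (add_eq_left.1 h.symm)
  rw [Fin.val_one', Nat.mod_eq_of_lt (by omega)] at this
  exact one_ne_zero this

theorem add_one_ne_sub_one (hn : 3 ≤ n) (v : Fin n) : v + 1 ≠ v - 1 := by
  intro h
  have h2 : (1 + 1 : Fin n) = 0 :=
    add_left_cancel (a := v) (by rw [add_zero, ← add_assoc, h, sub_add_cancel])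
  have := congrArg Fin.val h2
  simp only [Fin.val_add, Fin.val_one', Fin.val_zero] at this
  rw [Nat.mod_eq_of_lt (by omega : 1 < n), Nat.mod_eq_of_lt (by omega : 2 < n)] at this
  omega

end Fin

namespace SimpleGraph

variable {n : ℕ} [NeZero n]

def cycleEdges (p : Fin n → Prop) : SimpleGraph (Fin n) :=
  fromRel fun u v => v = u + 1 ∧ p u

variable (p : Fin n → Prop)

theorem cycleEdges_sup_compl : cycleEdges p ⊔ cycleEdges (¬ p ·) = cycleGraph n := by
  obtain ⟨m, rfl⟩ := Nat.exists_eq_add_one_of_ne_zero (NeZero.ne n)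
  rw [cycleGraph_eq_circulantGraph]
  ext u v
  simp only [cycleEdges, sup_adj, fromRel_adj, circulantGraph_adj, Set.mem_singleton_iff,
    sub_eq_iff_eq_add']
  tauto

theorem neighborSet_cycleEdges (hn : 2 ≤ n) (v : Fin n) :
    (cycleEdges p).neighborSet v = {w | w = v + 1 ∧ p v} ∪ {w | w = v - 1 ∧ p (v - 1)} := by
  ext w
  simp only [mem_neighborSet, cycleEdges, fromRel_adj, Set.mem_union, Set.mem_ofPred_eq,
    eq_sub_iff_add_eq]
  constructor
  · rintro ⟨-, ⟨rfl, hp⟩ | ⟨rfl, hp⟩⟩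
    · exact Or.inl ⟨rfl, hp⟩
    · exact Or.inr ⟨rfl, by simpa using hp⟩
  · rintro (⟨rfl, hp⟩ | ⟨rfl, hp⟩)
    · exact ⟨Fin.self_ne_add_one hn v, Or.inl ⟨rfl, hp⟩⟩
    · exact ⟨(Fin.self_ne_add_one hn w).symm, Or.inr ⟨rfl, by simpa using hp⟩⟩

theorem ncard_neighborSet_cycleEdges [DecidablePred p] (hn : 3 ≤ n) (v : Fin n) :
    ((cycleEdges p).neighborSet v).ncard =
      (if p v then 1 else 0) + (if p (v - 1) then 1 else 0) := by
  rw [neighborSet_cycleEdges p (by omega), Set.ncard_union_eq]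
  · split_ifs <;> simp [*]
  · rw [Set.disjoint_left]
    rintro w ⟨rfl, -⟩ ⟨h, -⟩
    exact Fin.add_one_ne_sub_one hn v h

theorem ncard_edgeSet_cycleEdges [DecidablePred p] (hn : 3 ≤ n) :
    (cycleEdges p).edgeSet.ncard = #{i | p i} := by
  have h := two_mul_ncard_edgeSet (cycleEdges p)
  simp_rw [ncard_neighborSet_cycleEdges p hn, sum_add_distrib] at h
  rw [Fintype.sum_equiv (Equiv.subRight 1) (fun v => if p (v - 1) then 1 else 0)
      (fun v => if p v then 1 else 0) fun _ => rfl,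
    sum_boole, Nat.cast_id] at h
  omega

theorem disjoint_cycleEdges_compl (hn : 3 ≤ n) :
    Disjoint (cycleEdges p) (cycleEdges (¬ p ·)) := by
  refine disjoint_neighborSet.1 fun v => ?_
  rw [neighborSet_cycleEdges _ (by omega), neighborSet_cycleEdges _ (by omega), Set.disjoint_left]
  rintro w (⟨rfl, hp⟩ | ⟨rfl, hp⟩) (⟨hw, hq⟩ | ⟨hw, hq⟩)
  · exact hq hp
  · exact Fin.add_one_ne_sub_one hn v hw
  · exact Fin.add_one_ne_sub_one hn v hw.symm
  · exact hq hp

theorem isWCycle_cycleEdges [DecidablePred p] {a b g : ℕ} (hn : 3 ≤ n)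
    (ha : ∀ v, (if p v then 1 else 0) + (if p (v - 1) then 1 else 0) ≤ a)
    (hb : ∀ v, (if ¬ p v then 1 else 0) + (if ¬ p (v - 1) then 1 else 0) ≤ b)
    (hg : #{i | p i} + 2 * #{i | ¬ p i} = g) :
    IsWCycle n (cycleEdges p) (cycleEdges (¬ p ·)) a b g := by
  refine ⟨disjoint_cycleEdges_compl p hn, ?_, fun v => ?_, fun v => ?_, fun v => ?_, ?_⟩
  · obtain ⟨m, rfl⟩ := Nat.exists_eq_add_one_of_ne_zero (NeZero.ne n)
    rw [cycleEdges_sup_compl]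
    exact cycleGraph_connected
  · rw [ncard_neighborSet_sup (disjoint_cycleEdges_compl p hn),
      ncard_neighborSet_cycleEdges _ hn, ncard_neighborSet_cycleEdges _ hn]
    split_ifs <;> simp_all
  · exact ncard_neighborSet_cycleEdges p hn v ▸ ha v
  · exact ncard_neighborSet_cycleEdges (¬ p ·) hn v ▸ hb v
  · rwa [ncard_edgeSet_cycleEdges p hn, ncard_edgeSet_cycleEdges (¬ p ·) hn]

theorem isWCycle_cycleEdges_of_alternating [DecidablePred p] {a b g : ℕ} (hn : 3 ≤ n)
    (hp : ∀ i, p (i + 1) ↔ ¬ p i) (ha : 1 ≤ a) (hb : 1 ≤ b) (hg : 3 * n = 2 * g) :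
    IsWCycle n (cycleEdges p) (cycleEdges (¬ p ·)) a b g := by
  have hcount : #{i | p i} = #{i | ¬ p i} :=
    card_equiv (Equiv.addRight 1) fun i => by
      simp only [mem_filter, mem_univ, true_and, Equiv.coe_addRight, hp, not_not]
  have htotal : #{i | p i} + #{i | ¬ p i} = n := by
    rw [card_filter_add_card_filter_not, card_univ, Fintype.card_fin]
  refine isWCycle_cycleEdges p hn (fun v => ?_) (fun v => ?_) (by omega) <;>
  · have hv := hp (v - 1)
    rw [sub_add_cancel] at hv
    split_ifs <;> simp_all

end SimpleGraph

theorem exists_isWCycle_allLight {a b g : ℕ} (hg : 3 ≤ g) (ha : 2 ≤ a) :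
    ∃ (n : ℕ) (L H : SimpleGraph (Fin n)), IsWCycle n L H a b g := by
  have : NeZero g := ⟨by omega⟩
  exact ⟨g, _, _, isWCycle_cycleEdges (fun _ => True) hg (by simpa) (by simp) (by simp)⟩

theorem exists_isWCycle_allHeavy {a b t : ℕ} (ht : 3 ≤ t) (hb : 2 ≤ b) :
    ∃ (n : ℕ) (L H : SimpleGraph (Fin n)), IsWCycle n L H a b (2 * t) := by
  have : NeZero t := ⟨by omega⟩
  exact ⟨t, _, _, isWCycle_cycleEdges (fun _ => False) ht (by simp) (by simpa) (by simp)⟩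

theorem exists_isWCycle_oneLight {a b t : ℕ} (ht : 2 ≤ t) (ha : 1 ≤ a) (hb : 2 ≤ b) :
    ∃ (n : ℕ) (L H : SimpleGraph (Fin n)), IsWCycle n L H a b (2 * t + 1) := by
  refine ⟨t + 1, _, _, isWCycle_cycleEdges (fun v : Fin (t + 1) => v = 0) (by omega)
    (fun v => ?_) (fun v => ?_) ?_⟩
  · have : ¬ (v = 0 ∧ v - 1 = 0) := fun ⟨h, h'⟩ =>
      Fin.self_ne_add_one (by omega) (v - 1) (by rw [sub_add_cancel, h', h])
    split_ifs <;> simp_all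
  · split_ifs <;> omega
  · rw [filter_eq', filter_ne', card_erase_of_mem (mem_univ _)]
    simp [add_comm]

theorem exists_isWCycle_alternating {a b k : ℕ} (hk : 2 ≤ k) (ha : 1 ≤ a) (hb : 1 ≤ b) :
    ∃ (n : ℕ) (L H : SimpleGraph (Fin n)), IsWCycle n L H a b (3 * k) := by
  have : NeZero (2 * k) := ⟨by omega⟩
  have hstep (i : Fin (2 * k)) : Even (i + 1 : Fin (2 * k)).val ↔ ¬ Even i.val := by
    rw [Fin.val_add, Fin.val_one', Nat.mod_eq_of_lt (by omega : 1 < 2 * k), Nat.even_iff,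
      Nat.even_iff, Nat.mod_mod_of_dvd _ (dvd_mul_right 2 k)]
    omega
  exact ⟨2 * k, _, _, isWCycle_cycleEdges_of_alternating (fun i => Even i.val) (by omega)
    hstep ha hb (by ring)⟩

/-- Characterization of the existence of `(a,b,g)`-wcycles. -/
theorem stmt_5 (a b g : ℕ) (hg : 3 ≤ g) :
    (∃ (n : ℕ) (L H : SimpleGraph (Fin n)), IsWCycle n L H a b g) ↔
      (2 ≤ a ∨
       (a = 1 ∧ 2 ≤ b ∧ 5 ≤ g) ∨
       (a = 1 ∧ b = 1 ∧ 6 ≤ g ∧ g % 3 = 0) ∨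
       (a = 0 ∧ 2 ≤ b ∧ 6 ≤ g ∧ g % 2 = 0)) := by
  refine ⟨fun ⟨_, _, _, h⟩ => h.constraints, ?_⟩
  rintro (ha | ⟨rfl, hb, hg5⟩ | ⟨rfl, rfl, hg6, hg3⟩ | ⟨-, hb, hg6, hg2⟩)
  · exact exists_isWCycle_allLight hg ha
  · obtain ⟨t, rfl | rfl⟩ := Nat.even_or_odd' g
    · exact exists_isWCycle_allHeavy (by omega) hb
    · exact exists_isWCycle_oneLight (by omega) le_rfl hb
  · obtain ⟨k, rfl⟩ := Nat.dvd_of_mod_eq_zero hg3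
    exact exists_isWCycle_alternating (by omega) le_rfl le_rfl
  · obtain ⟨t, rfl⟩ := Nat.dvd_of_mod_eq_zero hg2
    exact exists_isWCycle_allHeavy (by omega) hb
end

section
/- For g ≥ 3, a (1,1)-regular weighted graph of girth g exists if and only if g ≥ 6 and g ≡ 0 mod 3, and in that case the minimum number of vertices of such a weighted graph is 2g/3. -/
/-!
At every vertex the two edges of `L ⊔ H` are one light and one heavy edge, so the weights of
consecutive edges of a cycle sum to `3`, and a cycle of length `m` (hence even) has weight
`3m/2`. So the girth `g` is a multiple of `3`, at least `6` since `m ≥ 3`, and a cycle of weight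
`g` passes through `2g/3` distinct vertices. Conversely, colour the edges of the cycle graph on
`2k` vertices alternately: `L ⊔ H` is then connected and `2`-regular, so every cycle is
Hamiltonian and has weight `3k`.
-/

open Classical in
/-- Weight of a walk in `L ⊔ H`: light edges (in `L`) weigh 1, heavy edges weigh 2. -/
noncomputable def wWeight {V : Type*} (L H : SimpleGraph V) {u : V}
    (w : (L ⊔ H).Walk u u) : ℕ :=
  (w.edges.map fun e => if e ∈ L.edgeSet then 1 else 2).sum

/-- `(L,H)` is an `(a,b)`-regular weighted graph of girth `g`. -/
def IsWGraph {V : Type*} (L H : SimpleGraph V) (a b g : ℕ) : Prop :=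
  Disjoint L H ∧
  (∀ v, (L.neighborSet v).ncard = a) ∧
  (∀ v, (H.neighborSet v).ncard = b) ∧
  (∃ (u : V) (w : (L ⊔ H).Walk u u), w.IsCycle ∧ wWeight L H w = g) ∧
  (∀ (u : V) (w : (L ⊔ H).Walk u u), w.IsCycle → g ≤ wWeight L H w)

open SimpleGraph

theorem Set.subsingleton_of_ncard_eq_one {α : Type*} {s : Set α} (h : s.ncard = 1) :
    s.Subsingleton := by
  obtain ⟨a, rfl⟩ := Set.ncard_eq_one.1 h
  exact Set.subsingleton_singleton

theorem List.two_mul_sum_map_add_of_isChain {α : Type*} {f : α → ℕ} {s : ℕ} :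
    ∀ {a : α} {t : List α}, (a :: t).IsChain (fun x y => f x + f y = s) →
      2 * ((a :: t).map f).sum + s =
        s * (t.length + 1) + f a + f ((a :: t).getLast (List.cons_ne_nil a t))
  | a, [], _ => by simp; ring
  | a, b :: t, h => by
    rw [List.isChain_cons_cons] at h
    have ih := two_mul_sum_map_add_of_isChain h.2
    simp only [List.map_cons, List.sum_cons, List.length_cons, List.getLast_cons_cons] at ih ⊢
    linarith [h.1]

theorem List.two_mul_sum_map_of_isChain_of_getLast_head {α : Type*} {f : α → ℕ} {s : ℕ}
    {l : List α} (hchain : l.IsChain (fun x y => f x + f y = s))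
    (hwrap : ∀ h : l ≠ [], f (l.getLast h) + f (l.head h) = s) :
    2 * (l.map f).sum = s * l.length := by
  cases l with
  | nil => simp
  | cons a t =>
    have := two_mul_sum_map_add_of_isChain hchain
    have := hwrap (List.cons_ne_nil a t)
    simp only [List.head_cons, List.length_cons] at *
    linarith

open Classical in
noncomputable def edgeWeight {V : Type*} (L : SimpleGraph V) (e : Sym2 V) : ℕ :=
  if e ∈ L.edgeSet then 1 else 2

theorem edgeWeight_add_edgeWeight {V : Type*} {L H : SimpleGraph V} {v x y : V}
    (hL : (L.neighborSet v).Subsingleton) (hH : (H.neighborSet v).Subsingleton)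
    (hx : (L ⊔ H).Adj x v) (hy : (L ⊔ H).Adj v y) (hxy : x ≠ y) :
    edgeWeight L s(x, v) + edgeWeight L s(v, y) = 3 := by
  rw [Sym2.eq_swap]
  replace hx := hx.symm
  simp only [edgeWeight, mem_edgeSet, sup_adj] at *
  by_cases hLx : L.Adj v x <;> by_cases hLy : L.Adj v y
  · exact absurd (hL hLx hLy) hxy
  · simp [hLx, hLy]
  · simp [hLx, hLy]
  · exact absurd (hH (hx.resolve_left hLx) (hy.resolve_left hLy)) hxy

theorem wWeight_eq_sum {V : Type*} {L H : SimpleGraph V} {u : V} (w : (L ⊔ H).Walk u u) :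
    wWeight L H w = (w.darts.map fun d => edgeWeight L d.edge).sum := by
  rw [wWeight, Walk.edges, List.map_map]
  rfl

theorem two_mul_wWeight_of_isCycle {V : Type*} {L H : SimpleGraph V}
    (hL : ∀ v, (L.neighborSet v).Subsingleton) (hH : ∀ v, (H.neighborSet v).Subsingleton)
    {u : V} {w : (L ⊔ H).Walk u u} (hw : w.IsCycle) :
    2 * wWeight L H w = 3 * w.length := by
  rw [wWeight_eq_sum, ← w.length_darts]
  refine List.two_mul_sum_map_of_isChain_of_getLast_head
    (List.isChain_iff_getElem.2 fun i hi => ?_) fun h => ?_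
  · rw [w.darts_getElem_eq_getVert, w.darts_getElem_eq_getVert]
    rw [Walk.length_darts] at hi
    exact edgeWeight_add_edgeWeight (hL _) (hH _) (w.adj_getVert_succ (by omega))
      (w.adj_getVert_succ hi) (hw.getVert_sub_one_ne_getVert_add_one (i := i + 1) hi.le)
  · rw [Walk.getLast_darts_eq_lastDart, Walk.head_darts_eq_firstDart]
    exact edgeWeight_add_edgeWeight (hL u) (hH u) (w.adj_penultimate hw.not_nil)
      (w.adj_snd hw.not_nil) hw.snd_ne_penultimate.symm

namespace SimpleGraph.Walk.IsCycle

variable {V : Type*} {G : SimpleGraph V} {u : V} {w : G.Walk u u}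

theorem mem_support_of_adj (hw : w.IsCycle) {v x : V} (hG : (G.neighborSet v).ncard = 2)
    (hv : v ∈ w.support) (hadj : G.Adj v x) : x ∈ w.support := by
  have hsub : w.toSubgraph.neighborSet v ⊆ G.neighborSet v := fun _ h => w.toSubgraph.adj_sub h
  have heq := Set.eq_of_subset_of_ncard_le hsub
    (by rw [hG, hw.ncard_neighborSet_toSubgraph_eq_two hv])
    (Set.finite_of_ncard_ne_zero (by omega))
  have hx : w.toSubgraph.Adj v x := by rw [← Subgraph.mem_neighborSet, heq]; exact hadj
  exact w.mem_verts_toSubgraph.1 hx.snd_mem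

theorem isHamiltonianCycle_of_preconnected [DecidableEq V] (hw : w.IsCycle)
    (hG : ∀ v, (G.neighborSet v).ncard = 2) (hconn : G.Preconnected) : w.IsHamiltonianCycle := by
  have hmem (v : V) : v ∈ w.support := by
    induction (reachable_iff_reflTransGen u v).1 (hconn u v) with
    | refl => exact w.start_mem_support
    | tail _ hadj ih => exact hw.mem_support_of_adj (hG _) ih hadj
  refine isHamiltonianCycle_iff_isCycle_and_support_count_tail_eq_one.2
    ⟨hw, fun v => List.count_eq_one_of_mem hw.support_nodup ?_⟩
  rcases w.mem_support_iff.1 (hmem v) with rfl | h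
  · exact w.end_mem_tail_support hw.not_nil
  · exact h

theorem length_le_card [Fintype V] (hw : w.IsCycle) : w.length ≤ Fintype.card V := by
  have := hw.isPath_tail.length_lt
  rw [← w.length_tail_add_one hw.not_nil]
  omega

end SimpleGraph.Walk.IsCycle

theorem ncard_neighborSet_sup_eq_two {V : Type*} {L H : SimpleGraph V} (hd : Disjoint L H)
    {v : V} (hL : (L.neighborSet v).ncard = 1) (hH : (H.neighborSet v).ncard = 1) :
    ((L ⊔ H).neighborSet v).ncard = 2 := by
  have hdisj : Disjoint (L.neighborSet v) (H.neighborSet v) :=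
    Set.disjoint_left.2 fun x hxL hxH =>
      Set.disjoint_left.1 (disjoint_edgeSet.2 hd) (show s(v, x) ∈ L.edgeSet from hxL) hxH
  rw [neighborSet_sup, Set.ncard_union_eq hdisj (Set.finite_of_ncard_ne_zero (by omega))
    (Set.finite_of_ncard_ne_zero (by omega)), hL, hH]

theorem IsWGraph.exists_length_eq {V : Type*} [Fintype V] {L H : SimpleGraph V} {g : ℕ}
    (h : IsWGraph L H 1 1 g) : ∃ m, 3 ≤ m ∧ m ≤ Fintype.card V ∧ 2 * g = 3 * m := by
  obtain ⟨-, hL, hH, ⟨u, w, hw, rfl⟩, -⟩ := h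
  exact ⟨w.length, hw.three_le_length, hw.length_le_card, two_mul_wWeight_of_isCycle
    (fun v => Set.subsingleton_of_ncard_eq_one (hL v))
    (fun v => Set.subsingleton_of_ncard_eq_one (hH v)) hw⟩

theorem isWGraph_of_preconnected {V : Type*} [Fintype V] {L H : SimpleGraph V}
    (hd : Disjoint L H) (hL : ∀ v, (L.neighborSet v).ncard = 1)
    (hH : ∀ v, (H.neighborSet v).ncard = 1) (hconn : (L ⊔ H).Preconnected)
    {u : V} {c : (L ⊔ H).Walk u u} (hc : c.IsCycle) :
    IsWGraph L H 1 1 (3 * Fintype.card V / 2) := by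
  classical
  have hweight (v : V) (w : (L ⊔ H).Walk v v) (hw : w.IsCycle) :
      wWeight L H w = 3 * Fintype.card V / 2 := by
    have h2 := two_mul_wWeight_of_isCycle (fun v => Set.subsingleton_of_ncard_eq_one (hL v))
      (fun v => Set.subsingleton_of_ncard_eq_one (hH v)) hw
    have hlen := (hw.isHamiltonianCycle_of_preconnected
      (fun v => ncard_neighborSet_sup_eq_two hd (hL v) (hH v)) hconn).length_eq
    omega
  exact ⟨hd, hL, hH, ⟨u, c, hc, hweight u c hc⟩, fun v w hw => (hweight v w hw).ge⟩

/-- The edges `{i, i + 1 mod n}` of the `n`-cycle with `i % 2 = c`; for even `n` the values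
`c = 0, 1` split the cycle into two alternating perfect matchings. -/
def parityMatching (n c : ℕ) : SimpleGraph (Fin n) :=
  SimpleGraph.fromRel fun i j =>
    i.val % 2 = c ∧ (j.val = i.val + 1 ∨ i.val + 1 = n ∧ j.val = 0)

theorem parityMatching_adj {n c : ℕ} {i j : Fin n} : (parityMatching n c).Adj i j ↔
    i ≠ j ∧ (i.val % 2 = c ∧ (j.val = i.val + 1 ∨ i.val + 1 = n ∧ j.val = 0) ∨
      j.val % 2 = c ∧ (i.val = j.val + 1 ∨ j.val + 1 = n ∧ i.val = 0)) :=
  fromRel_adj ..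

theorem ncard_neighborSet_parityMatching {n c : ℕ} (hn : Even n) (hc : c < 2) (v : Fin n) :
    ((parityMatching n c).neighborSet v).ncard = 1 := by
  obtain ⟨m, rfl⟩ := hn
  have hv := v.isLt
  let p : ℕ := if v.val % 2 = c then (if v.val + 1 = m + m then 0 else v.val + 1)
    else (if v.val = 0 then m + m - 1 else v.val - 1)
  refine Set.ncard_eq_one.2
    ⟨⟨p, by simp only [p]; split_ifs <;> omega⟩, Set.ext fun j => ?_⟩
  have hj := j.isLt
  simp only [mem_neighborSet, parityMatching_adj, Set.mem_singleton_iff, ne_eq, Fin.ext_iff, p]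
  split_ifs <;> omega

theorem disjoint_parityMatching {n : ℕ} (hn : Even n) (h4 : 4 ≤ n) :
    Disjoint (parityMatching n 0) (parityMatching n 1) := by
  obtain ⟨m, rfl⟩ := hn
  rw [disjoint_iff]
  ext i j
  have := i.isLt
  have := j.isLt
  simp only [inf_adj, parityMatching_adj, bot_adj, iff_false, ne_eq, Fin.ext_iff]
  omega

theorem cycleGraph_le_sup_parityMatching (n : ℕ) :
    cycleGraph n ≤ parityMatching n 0 ⊔ parityMatching n 1 := by
  intro i j h
  have := i.isLt
  have := j.isLt
  simp only [sup_adj, parityMatching_adj, ne_eq, Fin.ext_iff]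
  rcases lt_or_gt_of_ne h.ne with hij | hij <;>
  · rw [cycleGraph_adj', Fin.coe_sub_iff_lt.2 hij, Fin.coe_sub_iff_le.2 hij.le] at h
    rw [Fin.lt_def] at hij
    omega

theorem exists_isWGraph (k : ℕ) (hk : 2 ≤ k) :
    ∃ L H : SimpleGraph (Fin (2 * k)), IsWGraph L H 1 1 (3 * k) := by
  have hle := cycleGraph_le_sup_parityMatching (2 * k)
  obtain ⟨u, c, hc, -⟩ := (cycleGraph_isContained_iff (by omega)).1 (IsContained.of_le hle)
  have := isWGraph_of_preconnected (disjoint_parityMatching (even_two_mul k) (by omega))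
    (ncard_neighborSet_parityMatching (even_two_mul k) (by omega))
    (ncard_neighborSet_parityMatching (even_two_mul k) (by omega))
    (cycleGraph_preconnected.mono hle) hc
  rw [Fintype.card_fin, show 3 * (2 * k) / 2 = 3 * k by omega] at this
  exact ⟨_, _, this⟩

theorem stmt_6_general (g : ℕ) :
    ((∃ (n : ℕ) (L H : SimpleGraph (Fin n)), IsWGraph L H 1 1 g) ↔
      (6 ≤ g ∧ g % 3 = 0)) ∧
    (6 ≤ g → g % 3 = 0 →
      IsLeast {n : ℕ | ∃ L H : SimpleGraph (Fin n), IsWGraph L H 1 1 g}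
        (2 * g / 3)) := by
  have hnec (n : ℕ) : (∃ L H : SimpleGraph (Fin n), IsWGraph L H 1 1 g) →
      6 ≤ g ∧ g % 3 = 0 ∧ 2 * g / 3 ≤ n := by
    rintro ⟨L, H, h⟩
    obtain ⟨m, hm3, hmn, hgm⟩ := h.exists_length_eq
    rw [Fintype.card_fin] at hmn
    omega
  have hsuff (h6 : 6 ≤ g) (h3 : g % 3 = 0) :
      ∃ L H : SimpleGraph (Fin (2 * g / 3)), IsWGraph L H 1 1 g := by
    obtain ⟨k, rfl⟩ : ∃ k, g = 3 * k := ⟨g / 3, by omega⟩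
    rw [show 2 * (3 * k) / 3 = 2 * k by omega]
    exact exists_isWGraph k (by omega)
  refine ⟨⟨fun ⟨n, h⟩ => ?_, fun ⟨h6, h3⟩ => ⟨_, hsuff h6 h3⟩⟩,
    fun h6 h3 => ⟨hsuff h6 h3, fun n hn => (hnec n hn).2.2⟩⟩
  obtain ⟨h6, h3, -⟩ := hnec n h
  exact ⟨h6, h3⟩

/-- A `(1,1)`-regular weighted graph of girth `g` exists iff `g ≥ 6` and
`3 ∣ g`, in which case the minimum order is `2g/3`. -/
theorem stmt_6 (g : ℕ) (hg : 3 ≤ g) :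
    ((∃ (n : ℕ) (L H : SimpleGraph (Fin n)), IsWGraph L H 1 1 g) ↔
      (6 ≤ g ∧ g % 3 = 0)) ∧
    (6 ≤ g → g % 3 = 0 →
      IsLeast {n : ℕ | ∃ L H : SimpleGraph (Fin n), IsWGraph L H 1 1 g}
        (2 * g / 3)) :=
  stmt_6_general g
end

section
/- Let a ≥ 3 and b ≥ 0 be integers with a·b even. Then there exists a weighted graph G = (L,H) on exactly a+b+1 vertices such that L is a-regular, H is b-regular, E(L) and E(H) are disjoint, and the minimum weight of a cycle in G (where L-edges weigh 1 and H-edges weigh 2) is 3. -/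
/-!
Take `H = Lᶜ`. Then `H` is `b`-regular as soon as `L` is `a`-regular on `a + b + 1` vertices,
every cycle has length at least 3 and hence weight at least 3, and a triangle of `L` is a cycle
of weight exactly 3. So it suffices to find an `a`-regular graph on `n = a + b + 1` vertices
containing a triangle, where `a * n` is even.

On `ℤ/n` take the circulant graph with jumps `±1, …, ±⌊a/2⌋`; it contains the triangle `0, 1, 2`
when `a ≥ 4`. For odd `a` the number `n` is even and we add a perfect matching avoiding the
circulant edges: `u ↦ u + n/2` when `a ≥ 5`, and for `a = 3` the reflection `u ↦ 2 - u`, whose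
two fixed points `1` and `1 + n/2` are matched with each other. The reflection matches `0` with
`2`, which closes the triangle `0, 1, 2` on the cycle.
-/

open SimpleGraph

section WeightedGirth

variable {V : Type*} (L H : SimpleGraph V)

lemma length_le_wWeight {u : V} (w : (L ⊔ H).Walk u u) : w.length ≤ wWeight L H w := by
  rw [← w.length_edges, wWeight, ← List.length_map]
  refine List.length_le_sum_of_one_le _ fun i hi => ?_
  obtain ⟨e, -, rfl⟩ := List.mem_map.mp hi
  split_ifs <;> omega

lemma three_le_wWeight {u : V} {w : (L ⊔ H).Walk u u} (hw : w.IsCycle) : 3 ≤ wWeight L H w :=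
  hw.three_le_length.trans (length_le_wWeight L H w)

lemma exists_isCycle_wWeight_eq_three {x y z : V} (hxy : L.Adj x y) (hyz : L.Adj y z)
    (hzx : L.Adj z x) : ∃ (u : V) (w : (L ⊔ H).Walk u u), w.IsCycle ∧ wWeight L H w = 3 := by
  refine ⟨x, .cons (Or.inl hxy) (.cons (Or.inl hyz) (.cons (Or.inl hzx) .nil)), ?_, ?_⟩
  · simp [Walk.cons_isCycle_iff, hxy.ne, hyz.ne, hzx.ne, hxy.ne.symm, hzx.ne.symm]
  · simp [wWeight, hxy, hyz, hzx]

end WeightedGirth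

lemma SimpleGraph.ncard_neighborSet_compl {V : Type*} [Finite V] (G : SimpleGraph V) (v : V) :
    (Gᶜ.neighborSet v).ncard = Nat.card V - (G.neighborSet v).ncard - 1 := by
  rw [G.neighborSet_compl, Set.ncard_sdiff_singleton_of_mem (by simp), Set.ncard_compl]

theorem isWGraph_compl_of_triangle {V : Type*} [Finite V] {L : SimpleGraph V} {a b : ℕ}
    (hV : Nat.card V = a + b + 1) (hL : ∀ v, (L.neighborSet v).ncard = a) {x y z : V}
    (hxy : L.Adj x y) (hyz : L.Adj y z) (hzx : L.Adj z x) : IsWGraph L Lᶜ a b 3 :=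
  ⟨disjoint_compl_right, hL, fun v => by rw [ncard_neighborSet_compl, hL, hV]; omega,
    exists_isCycle_wWeight_eq_three L Lᶜ hxy hyz hzx, fun _ _ hw => three_le_wWeight L Lᶜ hw⟩

namespace SimpleGraph

section Circulant

variable {G : Type*} [AddCommGroup G] {s : Set G}

lemma circulantGraph_adj_add_iff {u d : G} :
    (circulantGraph s).Adj u (u + d) ↔ d ≠ 0 ∧ (-d ∈ s ∨ d ∈ s) := by
  simp

lemma circulantGraph_neighborSet (hs : (0 : G) ∉ s) (v : G) :
    (circulantGraph s).neighborSet v = (v + ·) '' (s ∪ -s) := by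
  ext w
  obtain ⟨d, rfl⟩ : ∃ d, w = v + d := ⟨w - v, by abel⟩
  simp only [mem_neighborSet, circulantGraph_adj_add_iff, Set.image_union, Set.mem_union,
    Set.mem_image, Set.mem_neg, add_right_inj, exists_eq_right]
  constructor
  · exact fun h => h.2.symm
  · rintro (h | h)
    · exact ⟨by rintro rfl; exact hs h, Or.inr h⟩
    · exact ⟨by rintro rfl; exact hs (by simpa using h), Or.inl h⟩

lemma ncard_neighborSet_circulantGraph [Finite G] (hs : (0 : G) ∉ s) (hdisj : Disjoint s (-s))
    (v : G) : ((circulantGraph s).neighborSet v).ncard = 2 * s.ncard := by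
  rw [circulantGraph_neighborSet hs, Set.ncard_image_of_injective _ (add_right_injective v),
    Set.ncard_union_eq hdisj, Set.ncard_neg, two_mul]

end Circulant

section Involution

variable {V : Type*}

def involutionGraph (σ : V → V) : SimpleGraph V := fromRel fun u v => v = σ u

variable {σ : V → V}

lemma involutionGraph_neighborSet (hσ : Function.Involutive σ) (hfix : ∀ u, σ u ≠ u) (v : V) :
    (involutionGraph σ).neighborSet v = {σ v} := by
  ext w
  simp only [involutionGraph, mem_neighborSet, fromRel_adj, Set.mem_singleton_iff]
  constructor
  · rintro ⟨-, rfl | rfl⟩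
    exacts [rfl, (hσ w).symm]
  · rintro rfl
    exact ⟨(hfix v).symm, Or.inl rfl⟩

lemma ncard_neighborSet_sup_involutionGraph [Finite V] {G : SimpleGraph V}
    (hσ : Function.Involutive σ) (hfix : ∀ u, σ u ≠ u) (hG : ∀ u, ¬G.Adj u (σ u)) (v : V) :
    ((G ⊔ involutionGraph σ).neighborSet v).ncard = (G.neighborSet v).ncard + 1 := by
  rw [neighborSet_sup, involutionGraph_neighborSet hσ hfix, Set.union_singleton,
    Set.ncard_insert_of_notMem (s := G.neighborSet v) (hG v)]

end Involution

end SimpleGraph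

section PatchedReflection

variable {R : Type*} [CommRing R] [DecidableEq R] {h : R}

def patchedReflection (h u : R) : R := if u + u = 2 then u + h else 2 - u

lemma patchedReflection_involutive (hh : h + h = 0) :
    Function.Involutive (patchedReflection h) := by
  intro u
  by_cases hu : u + u = 2
  · have : u + h + (u + h) = 2 := by linear_combination hu + hh
    simp only [patchedReflection, hu, this, if_true]
    linear_combination hh
  · have : ¬(2 - u + (2 - u) = 2) := fun h' => hu (by linear_combination -h')
    simp [patchedReflection, hu, this]

lemma patchedReflection_ne_self (h0 : h ≠ 0) (u : R) : patchedReflection h u ≠ u := by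
  unfold patchedReflection
  split_ifs with hu
  · simpa using h0
  · exact fun h' => hu (by linear_combination -h')

lemma not_adj_patchedReflection (hh : h + h = 0) (h1 : h ≠ 1)
    (hodd : ∀ u : R, u + u ≠ 1 ∧ u + u ≠ 3) (u : R) :
    ¬(circulantGraph {1}).Adj u (patchedReflection h u) := by
  unfold patchedReflection
  split_ifs with hu
  · rw [circulantGraph_adj_add_iff, neg_eq_iff_add_eq_zero.mpr hh]
    simp [h1]
  · simp only [circulantGraph_adj, Set.mem_singleton_iff, not_and, not_or]
    exact fun _ => ⟨fun e => (hodd u).2 (by linear_combination e),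
      fun e => (hodd u).1 (by linear_combination -e)⟩

end PatchedReflection

section FinConstructions

open Fin.CommRing

variable {n : ℕ} [NeZero n]

lemma ncard_neighborSet_circulantGraph_Icc {k : ℕ} (hk : 2 * k < n) (v : Fin n) :
    ((circulantGraph (Fin.val ⁻¹' Set.Icc 1 k)).neighborSet v).ncard = 2 * k := by
  have hdisj :
      Disjoint (Fin.val ⁻¹' Set.Icc 1 k : Set (Fin n)) (-(Fin.val ⁻¹' Set.Icc 1 k)) := by
    refine Set.disjoint_left.mpr fun x hx hnx => ?_
    simp only [Set.mem_neg, Set.mem_preimage, Set.mem_Icc, Fin.val_neg] at hx hnx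
    split_ifs at hnx <;> omega
  rw [ncard_neighborSet_circulantGraph (by simp) hdisj,
    Set.ncard_preimage_of_injective_subset_range Fin.val_injective, ← Finset.coe_Icc,
    Set.ncard_coe_finset, Nat.card_Icc, Nat.add_sub_cancel]
  rintro i ⟨-, hi⟩
  exact ⟨⟨i, by omega⟩, rfl⟩

lemma circulantGraph_Icc_adj {k : ℕ} {x y : Fin n} (hxy : x < y) (hk : y.val - x.val ≤ k) :
    (circulantGraph (Fin.val ⁻¹' Set.Icc 1 k)).Adj x y := by
  refine (circulantGraph_adj _ _ _).mpr ⟨hxy.ne, Or.inr ?_⟩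
  rw [Fin.lt_def] at hxy
  simp only [Set.mem_preimage, Set.mem_Icc, Fin.sub_val_of_le hxy.le]
  omega

lemma exists_triangle_circulantGraph_Icc {k : ℕ} (hk : 2 ≤ k) (hn : 2 < n) :
    ∃ x y z : Fin n, (circulantGraph (Fin.val ⁻¹' Set.Icc 1 k)).Adj x y ∧
      (circulantGraph (Fin.val ⁻¹' Set.Icc 1 k)).Adj y z ∧
      (circulantGraph (Fin.val ⁻¹' Set.Icc 1 k)).Adj z x :=
  ⟨⟨0, by omega⟩, ⟨1, by omega⟩, ⟨2, hn⟩,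
    circulantGraph_Icc_adj (Fin.mk_lt_mk.mpr zero_lt_one) (by simp; omega),
    circulantGraph_Icc_adj (Fin.mk_lt_mk.mpr one_lt_two) (by simp; omega),
    (circulantGraph_Icc_adj (Fin.mk_lt_mk.mpr zero_lt_two) (by simp; omega)).symm⟩

theorem exists_regular_triangle_of_even {k : ℕ} (hk : 2 ≤ k) (hkn : 2 * k < n) :
    ∃ L : SimpleGraph (Fin n), (∀ v, (L.neighborSet v).ncard = 2 * k) ∧
      ∃ x y z, L.Adj x y ∧ L.Adj y z ∧ L.Adj z x :=
  ⟨_, ncard_neighborSet_circulantGraph_Icc hkn, exists_triangle_circulantGraph_Icc hk (by omega)⟩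

theorem exists_regular_triangle_of_odd {k m : ℕ} (hn : n = m + m) (hk : 2 ≤ k) (hkm : k < m) :
    ∃ L : SimpleGraph (Fin n), (∀ v, (L.neighborSet v).ncard = 2 * k + 1) ∧
      ∃ x y z, L.Adj x y ∧ L.Adj y z ∧ L.Adj z x := by
  set h : Fin n := ⟨m, by omega⟩
  have hh : h + h = 0 := Fin.ext (by simp [h, Fin.val_add, hn])
  have hinv : Function.Involutive (· + h) := fun u => by simp [add_assoc, hh]
  have hfix : ∀ u, u + h ≠ u := fun u => by simp [h, Fin.ext_iff]; omega
  have hnadj : ∀ u, ¬(circulantGraph (Fin.val ⁻¹' Set.Icc 1 k)).Adj u (u + h) := fun u => by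
    rw [circulantGraph_adj_add_iff, neg_eq_iff_add_eq_zero.mpr hh]
    simp [h]
    omega
  obtain ⟨x, y, z, hxy, hyz, hzx⟩ := exists_triangle_circulantGraph_Icc hk (n := n) (by omega)
  refine ⟨_ ⊔ involutionGraph (· + h), fun v => ?_, x, y, z, Or.inl hxy, Or.inl hyz, Or.inl hzx⟩
  rw [ncard_neighborSet_sup_involutionGraph hinv hfix hnadj,
    ncard_neighborSet_circulantGraph_Icc (by omega)]

theorem exists_cubic_triangle {m : ℕ} (hn : n = m + m) (hm : 2 ≤ m) :
    ∃ L : SimpleGraph (Fin n), (∀ v, (L.neighborSet v).ncard = 3) ∧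
      ∃ x y z, L.Adj x y ∧ L.Adj y z ∧ L.Adj z x := by
  set h : Fin n := ⟨m, by omega⟩
  have hh : h + h = 0 := Fin.ext (by simp [h, Fin.val_add, hn])
  have h0 : h ≠ 0 := by simp [h, Fin.ext_iff]; omega
  have h1 : h ≠ 1 := by simp [h, Fin.ext_iff, Nat.mod_eq_of_lt (by omega : 1 < n)]; omega
  have hone : (1 : Fin n) ≠ 0 := by simp [Fin.ext_iff, Nat.mod_eq_of_lt (by omega : 1 < n)]
  have htwo : (2 : Fin n) ≠ 0 := by simp [Fin.ext_iff, Nat.mod_eq_of_lt (by omega : 2 < n)]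
  have hodd : ∀ u : Fin n, u + u ≠ 1 ∧ u + u ≠ 3 := fun u => by
    have := Nat.mod_mod_of_dvd (u.val + u.val) (show 2 ∣ n from ⟨m, by omega⟩)
    simp only [ne_eq, Fin.ext_iff, Fin.val_add, Fin.coe_ofNat_eq_mod,
      Nat.mod_eq_of_lt (by omega : 1 < n), Nat.mod_eq_of_lt (by omega : 3 < n)]
    omega
  refine ⟨circulantGraph {1} ⊔ involutionGraph (patchedReflection h), fun v => ?_,
    0, 1, 2, Or.inl ?_, Or.inl ?_, Or.inr ?_⟩
  · rw [ncard_neighborSet_sup_involutionGraph (patchedReflection_involutive hh)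
      (patchedReflection_ne_self h0) (not_adj_patchedReflection hh h1 hodd),
      ncard_neighborSet_circulantGraph (by simpa using hone.symm) ?_, Set.ncard_singleton]
    rw [Set.neg_singleton, Set.disjoint_singleton]
    exact fun e => htwo (by linear_combination e)
  · exact (circulantGraph_adj _ _ _).mpr ⟨hone.symm, Or.inr (by simp)⟩
  · exact (circulantGraph_adj _ _ _).mpr
      ⟨fun e => hone (by linear_combination -e), Or.inr (by norm_num)⟩
  · simp [involutionGraph, patchedReflection, htwo]

end FinConstructions

theorem exists_regular_triangle {a n : ℕ} [NeZero n] (ha : 3 ≤ a) (han : a < n)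
    (hpar : Even (a * n)) :
    ∃ L : SimpleGraph (Fin n), (∀ v, (L.neighborSet v).ncard = a) ∧
      ∃ x y z, L.Adj x y ∧ L.Adj y z ∧ L.Adj z x := by
  obtain ⟨k, rfl | rfl⟩ := Nat.even_or_odd' a
  · exact exists_regular_triangle_of_even (by omega) han
  obtain ⟨m, hn⟩ : Even n :=
    (Nat.even_mul.mp hpar).resolve_left (Nat.not_even_iff_odd.mpr (odd_two_mul_add_one k))
  obtain rfl | hk : k = 1 ∨ 2 ≤ k := by omega
  · exact exists_cubic_triangle hn (by omega)
  · exact exists_regular_triangle_of_odd hn hk (by omega)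

/-- For `a ≥ 3` and `a·b` even, there is an `(a,b)`-regular weighted graph of
girth 3 on exactly `a+b+1` vertices. -/
theorem stmt_7 (a b : ℕ) (ha : 3 ≤ a) (hab : (a * b) % 2 = 0) :
    ∃ L H : SimpleGraph (Fin (a + b + 1)), IsWGraph L H a b 3 := by
  have hpar : Even (a * (a + b + 1)) := by
    rw [add_right_comm, mul_add, add_comm]
    exact (Nat.even_iff.mpr hab).add (Nat.even_mul_succ_self a)
  obtain ⟨L, hL, x, y, z, hxy, hyz, hzx⟩ := exists_regular_triangle ha (by omega) hpar
  exact ⟨L, Lᶜ, isWGraph_compl_of_triangle (Nat.card_fin _) hL hxy hyz hzx⟩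
end

section
/- For b ∈ {1, 2}, the minimum number of vertices of a weighted graph G = (L,H) with L 2-regular, H b-regular, disjoint edge sets, and girth 3 (minimum cycle weight 3, where L-edges weigh 1 and H-edges weigh 2) is exactly 6. -/
namespace SimpleGraph

variable {V : Type*} {L H : SimpleGraph V}

open Classical in
lemma wWeight_eq_length_add_countP {u : V} (w : (L ⊔ H).Walk u u) :
    wWeight L H w = w.length + w.edges.countP (· ∉ L.edgeSet) := by
  rw [wWeight, ← w.length_edges]
  induction w.edges with
  | nil => rfl
  | cons e l ih =>
    simp only [List.map_cons, List.sum_cons, List.length_cons, List.countP_cons, ih]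
    split_ifs <;> simp_all <;> omega

lemma three_le_wWeight {u : V} {w : (L ⊔ H).Walk u u} (hw : w.IsCycle) :
    3 ≤ wWeight L H w := by
  have := hw.three_le_length
  rw [wWeight_eq_length_add_countP]
  omega

lemma exists_isCycle_wWeight_eq_three_iff :
    (∃ (u : V) (w : (L ⊔ H).Walk u u), w.IsCycle ∧ wWeight L H w = 3) ↔
      ∃ s, L.IsNClique 3 s := by
  classical
  rw [is3Clique_iff_exists_cycle_length_three]
  constructor
  · rintro ⟨u, w, hw, hw3⟩
    have := hw.three_le_length
    rw [wWeight_eq_length_add_countP] at hw3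
    have hL : ∀ e ∈ w.edges, e ∈ L.edgeSet := by
      simpa using List.countP_eq_zero.mp (by omega : w.edges.countP (· ∉ L.edgeSet) = 0)
    exact ⟨u, w.transfer L hL, hw.transfer hL, by rw [Walk.length_transfer]; omega⟩
  · rintro ⟨u, w, hw, hlen⟩
    refine ⟨u, w.mapLe le_sup_left, hw.mapLe _, ?_⟩
    rw [wWeight_eq_length_add_countP, Walk.length_mapLe, Walk.edges_mapLe_eq_edges, hlen,
      List.countP_eq_zero.mpr]
    simpa using fun e he => w.edges_subset_edgeSet he

lemma isWGraph_three_iff {a b : ℕ} :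
    IsWGraph L H a b 3 ↔ Disjoint L H ∧ (∀ v, (L.neighborSet v).ncard = a) ∧
      (∀ v, (H.neighborSet v).ncard = b) ∧ ∃ s, L.IsNClique 3 s := by
  rw [IsWGraph, exists_isCycle_wWeight_eq_three_iff]
  exact ⟨fun ⟨hLH, hL, hH, hs, _⟩ => ⟨hLH, hL, hH, hs⟩,
    fun ⟨hLH, hL, hH, hs⟩ => ⟨hLH, hL, hH, hs, fun _ _ => three_le_wWeight⟩⟩

lemma neighborSet_eq_sdiff_of_isNClique_three {s : Finset V} {y : V}
    (hy2 : (L.neighborSet y).ncard = 2) (hs : L.IsNClique 3 s) (hy : y ∈ s) :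
    L.neighborSet y = ↑s \ {y} := by
  refine (Set.eq_of_subset_of_ncard_le ?_ ?_ (Set.finite_of_ncard_ne_zero (by omega))).symm
  · rintro x ⟨hx, hxy⟩
    exact hs.isClique hy hx (Ne.symm hxy)
  · rw [hy2, Set.ncard_sdiff_singleton_of_mem hy, Set.ncard_coe_finset, hs.card_eq]

lemma six_le_card_of_isNClique_three [Finite V] (hL : ∀ v, (L.neighborSet v).ncard = 2)
    (hLH : Disjoint L H) {s : Finset V} (hs : L.IsNClique 3 s) {x v : V} (hx : x ∈ s)
    (hxv : H.Adj x v) : 6 ≤ Nat.card V := by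
  have closed : ∀ y ∈ s, ∀ t, L.Adj y t → t ∈ s := fun y hy t ht =>
    ((neighborSet_eq_sdiff_of_isNClique_three (hL y) hs hy).subset ht).1
  have hv : v ∉ s := fun hv => hLH.le_bot ⟨hs.isClique hx hv hxv.ne, hxv⟩
  have hdisj : Disjoint (s : Set V) (insert v (L.neighborSet v)) := by
    rw [Set.disjoint_right]
    rintro t (rfl | ht) hts
    · exact hv hts
    · exact hv (closed t hts v ht.symm)
  calc 6 = ((s : Set V) ∪ insert v (L.neighborSet v)).ncard := by
        rw [Set.ncard_union_eq hdisj, Set.ncard_coe_finset, hs.card_eq,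
          Set.ncard_insert_of_notMem L.notMem_neighborSet_self, hL v]
    _ ≤ Nat.card V := Set.ncard_le_card _

lemma six_le_card_of_isWGraph [Finite V] {b : ℕ} (hb : b ≠ 0) (h : IsWGraph L H 2 b 3) :
    6 ≤ Nat.card V := by
  obtain ⟨hLH, hL, hH, s, hs⟩ := isWGraph_three_iff.mp h
  obtain ⟨x, hx⟩ : s.Nonempty := by rw [← Finset.card_pos, hs.card_eq]; omega
  obtain ⟨v, hxv⟩ := Set.nonempty_of_ncard_ne_zero (s := H.neighborSet x) (by rw [hH x]; exact hb)
  exact six_le_card_of_isNClique_three hL hLH hs hx hxv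

lemma ncard_neighborSet_eq_degree (G : SimpleGraph V) (v : V) [Fintype (G.neighborSet v)] :
    (G.neighborSet v).ncard = G.degree v := by
  rw [← Nat.card_coe_set_eq, Nat.card_eq_fintype_card, card_neighborSet_eq_degree]

end SimpleGraph

open SimpleGraph

/- The extremal examples: light triangles `{0,1,2}` and `{3,4,5}`, joined by the heavy matching
`i ~ i + 3` (`b = 1`) or by the heavy hexagon `K₃,₃` minus that matching (`b = 2`). -/

def twoTriangles : SimpleGraph (Fin 6) where
  Adj x y := x ≠ y ∧ x.val / 3 = y.val / 3
  symm := ⟨fun _ _ h => ⟨Ne.symm h.1, h.2.symm⟩⟩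
  loopless := ⟨fun _ h => h.1 rfl⟩

def crossMatching : SimpleGraph (Fin 6) where
  Adj x y := x.val / 3 ≠ y.val / 3 ∧ x.val % 3 = y.val % 3
  symm := ⟨fun _ _ h => ⟨Ne.symm h.1, h.2.symm⟩⟩
  loopless := ⟨fun _ h => h.1 rfl⟩

def crossHexagon : SimpleGraph (Fin 6) where
  Adj x y := x.val / 3 ≠ y.val / 3 ∧ x.val % 3 ≠ y.val % 3
  symm := ⟨fun _ _ h => ⟨Ne.symm h.1, Ne.symm h.2⟩⟩
  loopless := ⟨fun _ h => h.1 rfl⟩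

instance : DecidableRel twoTriangles.Adj := fun _ _ => inferInstanceAs (Decidable (_ ∧ _))
instance : DecidableRel crossMatching.Adj := fun _ _ => inferInstanceAs (Decidable (_ ∧ _))
instance : DecidableRel crossHexagon.Adj := fun _ _ => inferInstanceAs (Decidable (_ ∧ _))

lemma isWGraph_twoTriangles {H : SimpleGraph (Fin 6)} [DecidableRel H.Adj] {b : ℕ}
    (hLH : ∀ x y, twoTriangles.Adj x y → ¬H.Adj x y) (hH : ∀ v, H.degree v = b) :
    IsWGraph twoTriangles H 2 b 3 := by
  refine isWGraph_three_iff.mpr ⟨disjoint_left.mpr hLH, fun v => ?_, fun v => ?_, {0, 1, 2}, ?_⟩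
  · rw [ncard_neighborSet_eq_degree]
    revert v
    decide
  · rw [ncard_neighborSet_eq_degree, hH]
  · rw [is3Clique_triple_iff]
    decide

/-- For `b ∈ {1,2}`, the minimum order of a `(2,b)`-regular weighted graph of
girth 3 is exactly 6. -/
theorem stmt_9 (b : ℕ) (hb : b = 1 ∨ b = 2) :
    IsLeast {n : ℕ | ∃ L H : SimpleGraph (Fin n), IsWGraph L H 2 b 3} 6 := by
  refine ⟨?_, fun n ⟨L, H, hLH⟩ => ?_⟩
  · rcases hb with rfl | rfl
    · exact ⟨_, _, isWGraph_twoTriangles (H := crossMatching) (by decide) (by decide)⟩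
    · exact ⟨_, _, isWGraph_twoTriangles (H := crossHexagon) (by decide) (by decide)⟩
  · simpa using six_le_card_of_isWGraph (by omega) hLH
end

section
/- Let a and n be integers with a even, n odd, and 2a < n < 5a/2. Then every a-regular graph on n vertices contains a triangle. -/
/-!
Suppose the graph is triangle-free and take a shortest closed walk of odd length `L`, so `L ≥ 5`.
Two positions of the walk adjacent to a common vertex `u` cut it into two arcs of total length
`L`, each of length at least `2` since there are no triangles; the odd arc closed up through `u`
is an odd closed walk, hence has length at least `L`, so the arcs have lengths `2` and `L - 2`.
As `L` is odd and at least `5`, `u` is adjacent to at most two positions, and counting pairs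
(position, neighbour) gives `L * a ≤ 2 * n < 5 * a`. So there is no odd closed walk: the graph is
bipartite, and being `a`-regular with `a > 0` its two sides have equal size, contradicting `n` odd.
-/

open Finset SimpleGraph

namespace SimpleGraph

variable {V : Type*} {G : SimpleGraph V}

lemma exists_walk_length_of_adj_succ (c : ℕ → V) {i j : ℕ} (hij : i ≤ j)
    (hc : ∀ k, i ≤ k → k < j → G.Adj (c k) (c (k + 1))) :
    ∃ w : G.Walk (c i) (c j), w.length = j - i := by
  induction j, hij using Nat.le_induction with
  | base => exact ⟨.nil, by simp⟩
  | succ j hij ih =>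
    obtain ⟨w, hw⟩ := ih fun k hik hkj => hc k hik (by omega)
    exact ⟨w.concat (hc j hij (by omega)), by rw [Walk.length_concat, hw]; omega⟩

lemma Walk.adj_getVert_mod_succ {u : V} (w : G.Walk u u) (hw : 0 < w.length) (i : ℕ) :
    G.Adj (w.getVert (i % w.length)) (w.getVert ((i + 1) % w.length)) := by
  have hlt : i % w.length < w.length := Nat.mod_lt i hw
  convert w.adj_getVert_succ hlt using 1
  rw [← Nat.mod_add_mod]
  obtain h | h : i % w.length + 1 < w.length ∨ i % w.length + 1 = w.length := by omega
  · rw [Nat.mod_eq_of_lt h]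
  · rw [h, Nat.mod_self, w.getVert_zero, w.getVert_length]

lemma exists_shortest_odd_loop (h : ∃ u, ∃ w : G.Walk u u, Odd w.length) :
    ∃ u, ∃ w : G.Walk u u, Odd w.length ∧
      ∀ v (q : G.Walk v v), Odd q.length → w.length ≤ q.length := by
  classical
  have hex : ∃ L, ∃ u, ∃ w : G.Walk u u, Odd w.length ∧ w.length = L :=
    let ⟨u, w, hw⟩ := h; ⟨_, u, w, hw, rfl⟩
  obtain ⟨u, w, hodd, hL⟩ := Nat.find_spec hex
  exact ⟨u, w, hodd, fun v q hq => hL ▸ Nat.find_min' hex ⟨v, q, hq, rfl⟩⟩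

lemma five_le_of_cliqueFree_three {c : ℕ → V} {L : ℕ} (hG : G.CliqueFree 3)
    (hc : ∀ i, G.Adj (c i) (c (i + 1))) (hper : Function.Periodic c L) (hL : Odd L) :
    5 ≤ L := by
  classical
  obtain ⟨k, rfl⟩ := hL
  rcases (show k = 0 ∨ k = 1 ∨ 2 ≤ k by omega) with rfl | rfl | hk
  · exact absurd ((hper 0).subst (hc 0)) G.irrefl
  · have h20 : G.Adj (c 2) (c 0) := by
      simpa using (hper 0).subst (motive := fun x => G.Adj (c 2) x) (hc 2)
    exact ((is3Clique_triple_iff.2 ⟨hc 0, h20.symm, hc 1⟩).not_cliqueFree hG).elim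
  · omega

structure IsShortestOddLoop (G : SimpleGraph V) (c : ℕ → V) (L : ℕ) : Prop where
  adj : ∀ i, G.Adj (c i) (c (i + 1))
  periodic : Function.Periodic c L
  odd : Odd L
  le_length : ∀ v (q : G.Walk v v), Odd q.length → L ≤ q.length

namespace IsShortestOddLoop

variable {c : ℕ → V} {L : ℕ}

lemma sub_eq_two_or_add_two_eq (h : G.IsShortestOddLoop c L) (hG : G.CliqueFree 3) {u : V}
    {i j : ℕ} (hij : i < j) (hjL : j < L) (hi : G.Adj (c i) u) (hj : G.Adj (c j) u) :
    j - i = 2 ∨ j - i + 2 = L := by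
  classical
  have length_ne_one {x y : V} (w : G.Walk x y) (hx : G.Adj x u) (hy : G.Adj y u) :
      w.length ≠ 1 := fun h1 =>
    (is3Clique_triple_iff.2 ⟨w.adj_of_length_eq_one h1, hx, hy⟩).not_cliqueFree hG
  have le_length_add_two {x y : V} (w : G.Walk x y) (hx : G.Adj x u) (hy : G.Adj y u)
      (hw : Odd w.length) : L ≤ w.length + 2 := by
    simpa using h.le_length u (.cons hx.symm (w.concat hy)) (by simpa using hw.add_one.add_one)
  obtain ⟨w₁, hw₁⟩ := exists_walk_length_of_adj_succ c hij.le fun k _ _ => h.adj k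
  obtain ⟨w₂, hw₂⟩ := exists_walk_length_of_adj_succ c (show j ≤ i + L by omega)
    fun k _ _ => h.adj k
  have hi' : G.Adj (c (i + L)) u := by rwa [h.periodic i]
  have hL := Nat.odd_iff.1 h.odd
  rcases Nat.even_or_odd (j - i) with he | ho
  · rw [Nat.even_iff] at he
    have := le_length_add_two w₂ hj hi' (Nat.odd_iff.2 (by omega))
    omega
  · have := le_length_add_two w₁ hi hj (hw₁ ▸ ho)
    have := length_ne_one w₂ hj hi'
    omega

lemma card_filter_adj_le_two [DecidableRel G.Adj] (h : G.IsShortestOddLoop c L)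
    (hG : G.CliqueFree 3) (u : V) : #{i ∈ range L | G.Adj (c i) u} ≤ 2 := by
  have h5 := five_le_of_cliqueFree_three hG h.adj h.periodic h.odd
  have hL := Nat.odd_iff.1 h.odd
  have hpair {i j : ℕ} (hi : i ∈ {i ∈ range L | G.Adj (c i) u})
      (hj : j ∈ {i ∈ range L | G.Adj (c i) u}) (hij : i ≠ j) :
      j - i = 2 ∨ j - i + 2 = L ∨ i - j = 2 ∨ i - j + 2 = L := by
    simp only [mem_filter, mem_range] at hi hj
    rcases Nat.lt_or_gt_of_ne hij with hij | hji
    · have := h.sub_eq_two_or_add_two_eq hG hij hj.1 hi.2 hj.2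
      omega
    · have := h.sub_eq_two_or_add_two_eq hG hji hi.1 hj.2 hi.2
      omega
  by_contra! h3
  obtain ⟨i, hi, j, hj, k, hk, hij, hik, hjk⟩ := two_lt_card.1 h3
  have := hpair hi hj hij
  have := hpair hi hk hik
  have := hpair hj hk hjk
  omega

end IsShortestOddLoop

variable [Fintype V] [DecidableRel G.Adj]

lemma sum_degree_comp_eq_sum_card_filter_adj {ι : Type*} (s : Finset ι) (c : ι → V) :
    ∑ i ∈ s, G.degree (c i) = ∑ u, #{i ∈ s | G.Adj (c i) u} := by
  simp_rw [← card_neighborFinset_eq_degree, neighborFinset_eq_filter]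
  exact sum_card_bipartiteAbove_eq_sum_card_bipartiteBelow _

theorem isBipartite_of_cliqueFree_three_of_le_degree {δ : ℕ} (hG : G.CliqueFree 3)
    (hδ : ∀ v, δ ≤ G.degree v) (hcard : 2 * Fintype.card V < 5 * δ) : G.IsBipartite := by
  rw [IsBipartite, two_colorable_iff_forall_loop_even]
  by_contra! hodd
  obtain ⟨u, w, hw, hmin⟩ := exists_shortest_odd_loop (by simpa using hodd)
  have hloop : G.IsShortestOddLoop (fun i => w.getVert (i % w.length)) w.length :=
    ⟨w.adj_getVert_mod_succ hw.pos, fun i => by simp, hw, hmin⟩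
  have h5 := five_le_of_cliqueFree_three hG hloop.adj hloop.periodic hloop.odd
  have hcount : w.length * δ ≤ 2 * Fintype.card V := calc
    w.length * δ ≤ ∑ i ∈ range w.length, G.degree (w.getVert (i % w.length)) := by
      simpa [mul_comm] using card_nsmul_le_sum (range w.length) _ δ fun i _ => hδ _
    _ = ∑ v, #{i ∈ range w.length | G.Adj (w.getVert (i % w.length)) v} :=
      sum_degree_comp_eq_sum_card_filter_adj _ _
    _ ≤ ∑ _v : V, 2 := sum_le_sum fun v _ => hloop.card_filter_adj_le_two hG v
    _ = 2 * Fintype.card V := by simp [mul_comm]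
  have := Nat.mul_le_mul_right δ h5
  omega

theorem IsRegularOfDegree.even_card_of_isBipartite {d : ℕ} (hd : G.IsRegularOfDegree d)
    (hd0 : d ≠ 0) (hG : G.IsBipartite) : Even (Fintype.card V) := by
  obtain ⟨C⟩ := hG
  have hst : G.IsBipartiteWith ↑({v | C v = 0} : Finset V) ↑({v | C v ≠ 0} : Finset V) := by
    refine ⟨disjoint_coe.2 (disjoint_filter_filter_not _ _ _), fun v w hvw => ?_⟩
    have := C.valid hvw
    simp only [coe_filter, mem_univ, true_and, Set.mem_ofPred_eq]
    omega
  have hsum := isBipartiteWith_sum_degrees_eq hst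
  simp only [hd.degree_eq, sum_const, smul_eq_mul] at hsum
  rw [← card_univ, ← card_filter_add_card_filter_not (C · = 0), Nat.eq_of_mul_eq_mul_right
    (Nat.pos_of_ne_zero hd0) hsum]
  exact Even.add_self _

end SimpleGraph

theorem stmt_10_general (a n : ℕ) (hn : n % 2 = 1)
    (h2 : 2 * n < 5 * a)
    (G : SimpleGraph (Fin n)) (hreg : ∀ v, (G.neighborSet v).ncard = a) :
    ∃ x y z : Fin n, G.Adj x y ∧ G.Adj y z ∧ G.Adj x z := by
  classical
  have hdeg : G.IsRegularOfDegree a := fun v => by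
    rw [← hreg v, ← card_neighborFinset_eq_degree, neighborFinset_def, Set.ncard_eq_toFinset_card']
  by_contra! hfree
  have hG : G.CliqueFree 3 := fun s hs => by
    obtain ⟨x, y, z, hxy, hxz, hyz, -⟩ := is3Clique_iff.1 hs
    exact hfree x y z hxy hyz hxz
  have hbip := isBipartite_of_cliqueFree_three_of_le_degree hG (fun v => (hdeg v).ge)
    (by simpa using h2)
  have := hdeg.even_card_of_isBipartite (by omega) hbip
  rw [Fintype.card_fin, Nat.even_iff] at this
  omega

/-- If `a` is even, `n` is odd and `2a < n < 5a/2`, then every `a`-regular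
graph on `n` vertices contains a triangle. -/
theorem stmt_10 (a n : ℕ) (ha : a % 2 = 0) (hn : n % 2 = 1)
    (h1 : 2 * a < n) (h2 : 2 * n < 5 * a)
    (G : SimpleGraph (Fin n)) (hreg : ∀ v, (G.neighborSet v).ncard = a) :
    ∃ x y z : Fin n, G.Adj x y ∧ G.Adj y z ∧ G.Adj x z :=
  stmt_10_general a n hn h2 G hreg
end

section
/- For every even integer b with b ≥ 2, the minimum order of a weighted graph G = (L,H) with L 1-regular, H b-regular, disjoint edge sets, and girth 5 (minimum cycle weight 5 with L-edges weight 1, H-edges weight 2) is exactly b + 2. -/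
/-! A vertex has one light and `b` heavy neighbours, all distinct from each other and from
itself, so at least `b + 2` vertices are needed. Conversely, on `b + 2` vertices take `L` a
perfect matching and `H` its complement. Light edges of a cycle are pairwise vertex-disjoint,
so at most half of its `k ≥ 3` edges are light and its weight is at least `3k / 2 > 4`; a light
edge and any third vertex span a triangle of weight `1 + 2 + 2 = 5`. -/

open Finset

lemma List.sum_map_ite_one_two_add_countP {α : Type*} (p : α → Prop) [DecidablePred p]
    (l : List α) :
    (l.map fun a => if p a then 1 else 2).sum + l.countP (p ·) = 2 * l.length := by
  induction l with
  | nil => simp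
  | cons a l ih => by_cases ha : p a <;> simp [ha] <;> omega

namespace SimpleGraph

variable {V : Type*}

lemma two_mul_card_le_card_of_subsingleton_neighborSet [DecidableEq V] {L : SimpleGraph V}
    (hL : ∀ v, (L.neighborSet v).Subsingleton) {S : Finset (Sym2 V)} {T : Finset V}
    (hSL : ∀ e ∈ S, e ∈ L.edgeSet) (hST : ∀ e ∈ S, ∀ x ∈ e, x ∈ T) : 2 * #S ≤ #T := by
  have hdisj : (S : Set (Sym2 V)).PairwiseDisjoint Sym2.toFinset := by
    intro e he f hf hef
    refine Finset.disjoint_left.2 fun x hxe hxf => hef ?_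
    obtain ⟨y, rfl⟩ := Sym2.mem_iff_exists.1 (Sym2.mem_toFinset.1 hxe)
    obtain ⟨z, rfl⟩ := Sym2.mem_iff_exists.1 (Sym2.mem_toFinset.1 hxf)
    rw [show y = z from hL x (hSL _ he) (hSL _ hf)]
  calc 2 * #S = ∑ e ∈ S, #e.toFinset := by
        rw [sum_congr rfl fun e he => Sym2.card_toFinset_of_not_isDiag e
          (L.not_isDiag_of_mem_edgeSet (hSL e he)), sum_const, smul_eq_mul, mul_comm]
    _ = #(S.biUnion Sym2.toFinset) := (card_biUnion hdisj).symm
    _ ≤ #T := card_le_card <| biUnion_subset.2 fun e he x hx =>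
        hST e he x (Sym2.mem_toFinset.1 hx)

lemma Walk.IsCycle.two_mul_countP_edges_le {G L : SimpleGraph V}
    (hL : ∀ v, (L.neighborSet v).Subsingleton) [DecidablePred (· ∈ L.edgeSet)] {u : V}
    {w : G.Walk u u} (hw : w.IsCycle) : 2 * w.edges.countP (· ∈ L.edgeSet) ≤ w.length := by
  classical
  have hvert : ∀ e ∈ w.edges, ∀ x ∈ e, x ∈ w.support.tail.toFinset := by
    intro e he x hx
    rw [List.mem_toFinset]
    rcases w.mem_support_iff.1 (w.mem_support_iff_exists_mem_edges.2 (.inr ⟨e, he, hx⟩))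
      with rfl | hx
    · exact w.end_mem_tail_support hw.not_nil
    · exact hx
  have hcard : #w.support.tail.toFinset = w.length := by
    rw [List.toFinset_card_of_nodup hw.support_nodup, List.length_tail, w.length_support]
    rfl
  rw [List.countP_eq_length_filter, ← List.toFinset_card_of_nodup (hw.edges_nodup.filter _),
    ← hcard]
  refine two_mul_card_le_card_of_subsingleton_neighborSet hL (fun e he => ?_) fun e he => ?_
  · simpa using List.of_mem_filter (List.mem_toFinset.1 he)
  · exact hvert e (List.mem_of_mem_filter (List.mem_toFinset.1 he))

open Classical in
lemma five_le_wWeight {L H : SimpleGraph V} (hL : ∀ v, (L.neighborSet v).Subsingleton) {u : V}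
    {w : (L ⊔ H).Walk u u} (hw : w.IsCycle) : 5 ≤ wWeight L H w := by
  have hsum := List.sum_map_ite_one_two_add_countP (· ∈ L.edgeSet) w.edges
  have hlight := hw.two_mul_countP_edges_le hL
  have hlen := hw.three_le_length
  rw [w.length_edges] at hsum
  unfold wWeight
  omega

lemma ncard_neighborSet_add_ncard_neighborSet_lt_natCard [Finite V] {L H : SimpleGraph V}
    (hLH : Disjoint L H) (v : V) :
    (L.neighborSet v).ncard + (H.neighborSet v).ncard < Nat.card V := by
  have hdisj : Disjoint (L.neighborSet v) (H.neighborSet v) :=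
    Set.disjoint_left.2 fun x hL hH => (hLH.le_bot ⟨hL, hH⟩ : False)
  have hv : v ∉ L.neighborSet v ∪ H.neighborSet v := by simp
  calc (L.neighborSet v).ncard + (H.neighborSet v).ncard
      < (insert v (L.neighborSet v ∪ H.neighborSet v)).ncard := by
        rw [Set.ncard_insert_of_notMem hv, Set.ncard_union_eq hdisj]; omega
    _ ≤ Nat.card V := Set.ncard_le_card _

lemma ncard_neighborSet_compl_s16 [Fintype V] (G : SimpleGraph V) (v : V) :
    (Gᶜ.neighborSet v).ncard = Fintype.card V - 1 - (G.neighborSet v).ncard := by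
  classical
  simp only [← Nat.card_coe_set_eq, Nat.card_eq_fintype_card, card_neighborSet_eq_degree,
    degree_compl]

variable {L H : SimpleGraph V} {x y z : V}

open Classical in
lemma exists_isCycle_wWeight_eq_five (hLH : Disjoint L H) (hxy : L.Adj x y) (hyz : H.Adj y z)
    (hzx : H.Adj z x) : ∃ (u : V) (w : (L ⊔ H).Walk u u), w.IsCycle ∧ wWeight L H w = 5 := by
  have hLyz : ¬L.Adj y z := fun h => (hLH.le_bot ⟨h, hyz⟩ : False)
  have hLzx : ¬L.Adj z x := fun h => (hLH.le_bot ⟨h, hzx⟩ : False)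
  refine ⟨x, .cons (Or.inl hxy) (.cons (Or.inr hyz) (.cons (Or.inr hzx) .nil)), ?_, ?_⟩
  · simp [Walk.cons_isCycle_iff, hxy.ne, hyz.ne, hzx.ne, hxy.ne.symm, hzx.ne.symm]
  · simp [wWeight, hxy, hLyz, hLzx]

def pairing (n : ℕ) : SimpleGraph (Fin n) :=
  SimpleGraph.fromRel fun x y => (x : ℕ) / 2 = y / 2

lemma pairing_neighborSet_subsingleton {n : ℕ} (v : Fin n) :
    ((pairing n).neighborSet v).Subsingleton := by
  intro x hx y hy
  simp only [pairing, mem_neighborSet, fromRel_adj, ne_eq, Fin.ext_iff] at hx hy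
  ext; omega

lemma ncard_neighborSet_pairing {n : ℕ} (hn : Even n) (v : Fin n) :
    ((pairing n).neighborSet v).ncard = 1 := by
  obtain ⟨k, rfl⟩ := hn
  rw [Set.ncard_eq_one]
  refine ⟨⟨2 * (v / 2) + (1 - v % 2), by omega⟩, Set.ext fun x => ?_⟩
  simp only [pairing, mem_neighborSet, fromRel_adj, ne_eq, Fin.ext_iff, Set.mem_singleton_iff]
  omega

end SimpleGraph

open SimpleGraph in
/-- For even `b ≥ 2`, the minimum order of a `(1,b)`-regular weighted graph of
girth 5 is exactly `b + 2`. -/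
theorem stmt_16 (b : ℕ) (hb : 2 ≤ b) (hbe : b % 2 = 0) :
    IsLeast {n : ℕ | ∃ L H : SimpleGraph (Fin n), IsWGraph L H 1 b 5}
      (b + 2) := by
  have hb2 : Even (b + 2) := by rw [Nat.even_iff]; omega
  refine ⟨⟨pairing (b + 2), (pairing (b + 2))ᶜ, disjoint_compl_right,
    ncard_neighborSet_pairing hb2, fun v => ?_, ?_,
    fun _ _ hw => five_le_wWeight pairing_neighborSet_subsingleton hw⟩, ?_⟩
  · rw [ncard_neighborSet_compl_s16, ncard_neighborSet_pairing hb2, Fintype.card_fin]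
    omega
  · refine exists_isCycle_wWeight_eq_five disjoint_compl_right (x := ⟨0, by omega⟩)
      (y := ⟨1, by omega⟩) (z := ⟨2, by omega⟩) ?_ ?_ ?_ <;> simp [pairing, Fin.ext_iff]
  · rintro n ⟨L, H, hLH, hL, hH, ⟨u, -⟩, -⟩
    have := ncard_neighborSet_add_ncard_neighborSet_lt_natCard hLH u
    rw [hL u, hH u, Nat.card_fin] at this
    omega
end
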